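/- arXiv:0902.0681 — 6 statements merged into one kernel-verified Lean document; each statement's English description precedes it below -/
import Mathlib

section
/- Let Π be the Poincaré return map of the periodic orbit r = 0 of dr/dθ = F(r,θ) over the cylinder with period T, and let V be an inverse integrating factor defined in a neighborhood of r = 0. Then V(Π(r₀), T) = V(r₀, 0) · Π'(r₀) for all r₀ in a neighborhood of 0. -/
/-!
Along an orbit `θ ↦ Ψ θ r₀`, the PDE says exactly that `w θ = V (Ψ θ r₀) θ` solves the linear
equation `w' = ∂ᵣF (Ψ θ r₀, θ) · w`, so `V (Π r₀) T = V r₀ 0 · exp ∫₀ᵀ ∂ᵣF (Ψ θ r₀, θ) dθ`.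
The same exponential is `Π'(r₀)`: in one dimension the difference of two orbits solves the linear
equation whose coefficient is the divided difference of `F` between them, so
`Ψ T s - Ψ T r₀ = (s - r₀) · exp ∫₀ᵀ slopeFst F (Ψ θ s) (Ψ θ r₀) θ dθ`. This identity makes the
flow monotone in the initial value, hence locally bounded, hence continuous in it, and dominated
convergence lets `s → r₀` in the exponent.
-/

open Real Set Filter Topology Function MeasureTheory

section PartialDerivatives

variable {f : ℝ → ℝ → ℝ}

lemma hasDerivAt_fst_of_differentiableAt {x y : ℝ} (hf : DifferentiableAt ℝ (uncurry f) (x, y)) :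
    HasDerivAt (fun s => f s y) (fderiv ℝ (uncurry f) (x, y) (1, 0)) x :=
  hf.hasFDerivAt.comp_hasDerivAt (f := fun s => (s, y)) x
    ((hasDerivAt_id x).prodMk (hasDerivAt_const x y))

lemma hasDerivAt_snd_of_differentiableAt {x y : ℝ} (hf : DifferentiableAt ℝ (uncurry f) (x, y)) :
    HasDerivAt (fun t => f x t) (fderiv ℝ (uncurry f) (x, y) (0, 1)) y :=
  hf.hasFDerivAt.comp_hasDerivAt (f := fun t => (x, t)) y
    ((hasDerivAt_const y x).prodMk (hasDerivAt_id y))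

lemma hasDerivAt_comp_graph {x : ℝ → ℝ} {x' θ : ℝ}
    (hf : DifferentiableAt ℝ (uncurry f) (x θ, θ)) (hx : HasDerivAt x x' θ) :
    HasDerivAt (fun t => f (x t) t)
      (deriv (fun s => f s θ) (x θ) * x' + deriv (fun t => f (x θ) t) θ) θ := by
  have h := hf.hasFDerivAt.comp_hasDerivAt (f := fun t => (x t, t)) θ (hx.prodMk (hasDerivAt_id θ))
  have hsplit : ((x', 1) : ℝ × ℝ) = x' • ((1, 0) : ℝ × ℝ) + (0, 1) := by simp
  rwa [hsplit, map_add, map_smul, smul_eq_mul, mul_comm,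
    ← (hasDerivAt_fst_of_differentiableAt hf).deriv,
    ← (hasDerivAt_snd_of_differentiableAt hf).deriv] at h

variable (hf : ContDiff ℝ 1 (uncurry f))
include hf

lemma ContDiff.hasDerivAt_fst (x y : ℝ) :
    HasDerivAt (fun s => f s y) (deriv (fun s => f s y) x) x :=
  (hasDerivAt_fst_of_differentiableAt (hf.differentiable one_ne_zero _)).differentiableAt.hasDerivAt

lemma ContDiff.continuous_deriv_fst : Continuous fun p : ℝ × ℝ => deriv (fun s => f s p.2) p.1 := by
  have h : (fun p : ℝ × ℝ => deriv (fun s => f s p.2) p.1) =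
      fun p => fderiv ℝ (uncurry f) p (1, 0) :=
    funext fun p => (hasDerivAt_fst_of_differentiableAt (hf.differentiable one_ne_zero p)).deriv
  rw [h]
  exact (hf.continuous_fderiv one_ne_zero).clm_apply continuous_const

end PartialDerivatives

lemma eq_mul_exp_integral_of_hasDerivAt {w c : ℝ → ℝ} (hc : Continuous c)
    (hw : ∀ t, HasDerivAt w (c t * w t) t) (t : ℝ) :
    w t = w 0 * exp (∫ u in (0 : ℝ)..t, c u) := by
  set C : ℝ → ℝ := fun t => ∫ u in (0 : ℝ)..t, c u
  have hC : ∀ t, HasDerivAt C (c t) t := fun t => hc.integral_hasStrictDerivAt 0 t |>.hasDerivAt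
  have hconst : ∀ s, HasDerivAt (fun t => w t * exp (-C t)) 0 s := fun s => by
    refine ((hw s).fun_mul (hC s).fun_neg.exp).congr_deriv ?_
    ring
  have := is_const_of_deriv_eq_zero (fun t => (hconst t).differentiableAt)
    (fun t => (hconst t).deriv) t 0
  simp only [C, intervalIntegral.integral_same, neg_zero, exp_zero, mul_one] at this
  rw [← this, mul_assoc, ← exp_add, neg_add_cancel, exp_zero, mul_one]

lemma hasDerivAt_of_sub_eq_mul {f φ : ℝ → ℝ} {x : ℝ} (hφ : ContinuousAt φ x)
    (h : ∀ y, f y - f x = (y - x) * φ y) : HasDerivAt f (φ x) x := by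
  rw [hasDerivAt_iff_tendsto_slope]
  refine (hφ.tendsto.mono_left nhdsWithin_le_nhds).congr' ?_
  filter_upwards [self_mem_nhdsWithin] with y hy
  rw [slope_def_field, h, mul_div_cancel_left₀ _ (sub_ne_zero.2 hy)]

/-- The divided difference `(f x θ - f y θ) / (x - y)`, written as an average of `∂ₓf` over the
segment so that it is continuous across the diagonal `x = y`. -/
noncomputable def slopeFst (f : ℝ → ℝ → ℝ) (x y θ : ℝ) : ℝ :=
  ∫ u in (0 : ℝ)..1, deriv (fun s => f s θ) (y + u * (x - y))

section SlopeFst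

variable {f : ℝ → ℝ → ℝ}

@[simp]
lemma slopeFst_self (x θ : ℝ) : slopeFst f x x θ = deriv (fun s => f s θ) x := by
  simp [slopeFst]

variable (hf : ContDiff ℝ 1 (uncurry f))
include hf

lemma slopeFst_mul_sub (x y θ : ℝ) : slopeFst f x y θ * (x - y) = f x θ - f y θ := by
  have hline : ∀ u : ℝ, HasDerivAt (fun u => y + u * (x - y)) (x - y) u := fun u => by
    simpa using ((hasDerivAt_id u).mul_const (x - y)).const_add y
  have hderiv : ∀ u ∈ uIcc (0 : ℝ) 1, HasDerivAt (fun u => f (y + u * (x - y)) θ)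
      (deriv (fun s => f s θ) (y + u * (x - y)) * (x - y)) u := fun u _ =>
    (hf.hasDerivAt_fst _ θ).comp u (hline u)
  have hcont : Continuous fun u : ℝ => deriv (fun s => f s θ) (y + u * (x - y)) * (x - y) :=
    (hf.continuous_deriv_fst.comp (by fun_prop : Continuous fun u : ℝ => (y + u * (x - y), θ))).mul
      continuous_const
  rw [slopeFst, ← intervalIntegral.integral_mul_const,
    intervalIntegral.integral_eq_sub_of_hasDerivAt hderiv (hcont.intervalIntegrable 0 1)]
  simp

lemma continuous_slopeFst : Continuous fun p : ℝ × ℝ × ℝ => slopeFst f p.1 p.2.1 p.2.2 :=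
  intervalIntegral.continuous_parametric_intervalIntegral_of_continuous'
    (f := fun (p : ℝ × ℝ × ℝ) (u : ℝ) => deriv (fun s => f s p.2.2) (p.2.1 + u * (p.1 - p.2.1)))
    (hf.continuous_deriv_fst.comp (by fun_prop : Continuous fun q : (ℝ × ℝ × ℝ) × ℝ =>
      (q.1.2.1 + q.2 * (q.1.1 - q.1.2.1), q.1.2.2))) 0 1

end SlopeFst

section Flow

variable {F Ψ : ℝ → ℝ → ℝ} (hF : ContDiff ℝ 1 (uncurry F)) (hΨ0 : ∀ r, Ψ 0 r = r)
  (hflow : ∀ θ r, HasDerivAt (fun t => Ψ t r) (F (Ψ θ r) θ) θ)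

include hflow in
lemma continuous_flow_orbit (r : ℝ) : Continuous fun t => Ψ t r :=
  continuous_iff_continuousAt.2 fun t => (hflow t r).continuousAt

include hF hΨ0 hflow

lemma flow_sub_flow (s r t : ℝ) :
    Ψ t s - Ψ t r = (s - r) * exp (∫ u in (0 : ℝ)..t, slopeFst F (Ψ u s) (Ψ u r) u) := by
  have h := eq_mul_exp_integral_of_hasDerivAt (w := fun t => Ψ t s - Ψ t r)
    (c := fun u => slopeFst F (Ψ u s) (Ψ u r) u)
    ((continuous_slopeFst hF).comp ((continuous_flow_orbit hflow s).prodMk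
      ((continuous_flow_orbit hflow r).prodMk continuous_id)))
    (fun u => ((hflow u s).sub (hflow u r)).congr_deriv (slopeFst_mul_sub hF _ _ u).symm) t
  simpa only [hΨ0] using h

lemma monotone_flow (t : ℝ) : Monotone (Ψ t) := fun s s' h => by
  have h' := flow_sub_flow hF hΨ0 hflow s' s t
  exact sub_nonneg.1 (h' ▸ mul_nonneg (sub_nonneg.2 h) (exp_pos _).le)

lemma exists_bound_slopeFst_flow (a b T : ℝ) : ∃ L, ∀ s ∈ Icc a b, ∀ r ∈ Icc a b,
    ∀ u ∈ uIcc 0 T, |slopeFst F (Ψ u s) (Ψ u r) u| ≤ L := by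
  obtain ⟨Na, hNa⟩ := isCompact_uIcc.exists_bound_of_continuousOn
    (continuous_flow_orbit hflow a).continuousOn
  obtain ⟨Nb, hNb⟩ := isCompact_uIcc.exists_bound_of_continuousOn
    (continuous_flow_orbit hflow b).continuousOn
  set N := max Na Nb
  have hbox : ∀ s ∈ Icc a b, ∀ u ∈ uIcc 0 T, Ψ u s ∈ Icc (-N) N := fun s hs u hu => by
    have ha := abs_le.1 (hNa u hu)
    have hb := abs_le.1 (hNb u hu)
    have := monotone_flow hF hΨ0 hflow u hs.1
    have := monotone_flow hF hΨ0 hflow u hs.2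
    constructor <;> linarith [le_max_left Na Nb, le_max_right Na Nb]
  have hK : IsCompact (Icc (-N) N ×ˢ Icc (-N) N ×ˢ uIcc 0 T) :=
    isCompact_Icc.prod (isCompact_Icc.prod isCompact_uIcc)
  obtain ⟨L, hL⟩ := hK.exists_bound_of_continuousOn (continuous_slopeFst hF).continuousOn
  exact ⟨L, fun s hs r hr u hu => hL (Ψ u s, Ψ u r, u) ⟨hbox s hs u hu, hbox r hr u hu, hu⟩⟩

lemma continuous_flow (t : ℝ) : Continuous (Ψ t) := by
  refine continuous_iff_continuousAt.2 fun r₀ => ?_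
  obtain ⟨L, hL⟩ := exists_bound_slopeFst_flow hF hΨ0 hflow (r₀ - 1) (r₀ + 1) t
  have hnhds : Icc (r₀ - 1) (r₀ + 1) ∈ 𝓝 r₀ := Icc_mem_nhds (by linarith) (by linarith)
  have hbdd : IsBoundedUnder (· ≤ ·) (𝓝 r₀)
      (fun s => ‖exp (∫ u in (0 : ℝ)..t, slopeFst F (Ψ u s) (Ψ u r₀) u)‖) := by
    refine isBoundedUnder_of_eventually_le (a := exp (L * |t|)) ?_
    filter_upwards [hnhds] with s hs
    rw [norm_of_nonneg (exp_pos _).le, exp_le_exp]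
    refine (le_abs_self _).trans ?_
    simpa using intervalIntegral.norm_integral_le_of_norm_le_const
      (f := fun u => slopeFst F (Ψ u s) (Ψ u r₀) u) fun u hu =>
        hL s hs r₀ ⟨by linarith, by linarith⟩ u (uIoc_subset_uIcc hu)
  rw [ContinuousAt, ← tendsto_sub_nhds_zero_iff]
  simp_rw [flow_sub_flow hF hΨ0 hflow _ r₀ t]
  exact (tendsto_sub_nhds_zero_iff.2 tendsto_id).zero_mul_isBoundedUnder_le hbdd

theorem hasDerivAt_flow (r₀ T : ℝ) :
    HasDerivAt (Ψ T) (exp (∫ u in (0 : ℝ)..T, deriv (fun s => F s u) (Ψ u r₀))) r₀ := by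
  obtain ⟨L, hL⟩ := exists_bound_slopeFst_flow hF hΨ0 hflow (r₀ - 1) (r₀ + 1) T
  have hq : ContinuousAt (fun s => ∫ u in (0 : ℝ)..T, slopeFst F (Ψ u s) (Ψ u r₀) u) r₀ := by
    refine intervalIntegral.continuousAt_of_dominated_interval (bound := fun _ => L)
      (Eventually.of_forall fun s => ?_) ?_ intervalIntegrable_const
      (ae_of_all _ fun u _ => ?_)
    · exact ((continuous_slopeFst hF).comp ((continuous_flow_orbit hflow s).prodMk
        ((continuous_flow_orbit hflow r₀).prodMk continuous_id))).aestronglyMeasurable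
    · filter_upwards [Icc_mem_nhds (by linarith : r₀ - 1 < r₀) (by linarith : r₀ < r₀ + 1)]
        with s hs
      exact ae_of_all _ fun u hu =>
        hL s hs r₀ ⟨by linarith, by linarith⟩ u (uIoc_subset_uIcc hu)
    · exact ((continuous_slopeFst hF).comp ((continuous_flow hF hΨ0 hflow u).prodMk
        (continuous_const (y := (Ψ u r₀, u))))).continuousAt
  simpa using hasDerivAt_of_sub_eq_mul hq.rexp fun s => flow_sub_flow hF hΨ0 hflow s r₀ T

end Flow

def IsInverseIntegratingFactor (F V : ℝ → ℝ → ℝ) : Prop :=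
  ∀ r θ, deriv (fun t => V r t) θ + deriv (fun s => V s θ) r * F r θ =
    deriv (fun s => F s θ) r * V r θ

theorem IsInverseIntegratingFactor.apply_flow {F V Ψ : ℝ → ℝ → ℝ}
    (hV : IsInverseIntegratingFactor F V) (hVC1 : ContDiff ℝ 1 (uncurry V))
    (hF : ContDiff ℝ 1 (uncurry F)) (hΨ0 : ∀ r, Ψ 0 r = r)
    (hflow : ∀ θ r, HasDerivAt (fun t => Ψ t r) (F (Ψ θ r) θ) θ) (r₀ T : ℝ) :
    V (Ψ T r₀) T = V r₀ 0 * exp (∫ u in (0 : ℝ)..T, deriv (fun s => F s u) (Ψ u r₀)) := by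
  have h := eq_mul_exp_integral_of_hasDerivAt (w := fun t => V (Ψ t r₀) t)
    (c := fun u => deriv (fun s => F s u) (Ψ u r₀))
    (hF.continuous_deriv_fst.comp ((continuous_flow_orbit hflow r₀).prodMk continuous_id))
    (fun θ => (hasDerivAt_comp_graph (hVC1.differentiable one_ne_zero _) (hflow θ r₀)).congr_deriv
      (by rw [← hV]; ring)) T
  simpa only [hΨ0] using h

theorem stmt_2_general
    (T : ℝ)
    (F V : ℝ → ℝ → ℝ) (Ψ : ℝ → ℝ → ℝ)
    (hFa : AnalyticOn ℝ (fun p : ℝ × ℝ => F p.1 p.2) Set.univ)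
    (hVC1 : ContDiff ℝ 1 (fun p : ℝ × ℝ => V p.1 p.2))
    (hPDE : ∀ r θ : ℝ,
      deriv (fun t => V r t) θ + deriv (fun s => V s θ) r * F r θ
        = deriv (fun s => F s θ) r * V r θ)
    (hΨ0 : ∀ r₀ : ℝ, Ψ 0 r₀ = r₀)
    (hflow : ∀ θ r₀ : ℝ, HasDerivAt (fun t => Ψ t r₀) (F (Ψ θ r₀) θ) θ) :
    ∀ᶠ r₀ in nhds (0 : ℝ),
      V (Ψ T r₀) T = V r₀ 0 * deriv (fun s => Ψ T s) r₀ := by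
  have hF : ContDiff ℝ 1 (uncurry F) :=
    contDiffOn_univ.1 ((analyticOn_univ.1 hFa).contDiffOn uniqueDiffOn_univ)
  refine Eventually.of_forall fun r₀ => ?_
  rw [(hasDerivAt_flow hF hΨ0 hflow r₀ T).deriv]
  exact IsInverseIntegratingFactor.apply_flow hPDE hVC1 hF hΨ0 hflow r₀ T

/-- If `Ψ` is the flow of `dr/dθ = F(r,θ)` (with `Ψ 0 r₀ = r₀`),
`Π r₀ = Ψ T r₀` the Poincaré return map of the periodic orbit `r = 0`, and `V` a `C¹`
inverse integrating factor near `r = 0`, then `V(Π r₀, T) = V(r₀, 0) * Π'(r₀)`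
for all `r₀` in a neighborhood of `0`. -/
theorem stmt_2
    (T : ℝ) (hT : 0 < T)
    (F V : ℝ → ℝ → ℝ) (Ψ : ℝ → ℝ → ℝ)
    (hFa : AnalyticOn ℝ (fun p : ℝ × ℝ => F p.1 p.2) Set.univ)
    (hF0 : ∀ θ : ℝ, F 0 θ = 0)
    (hFper : ∀ r θ : ℝ, F r (θ + T) = F r θ)
    (hVper : ∀ r θ : ℝ, V r (θ + T) = V r θ)
    (hVC1 : ContDiff ℝ 1 (fun p : ℝ × ℝ => V p.1 p.2))
    (hVnotnull : ∃ r θ : ℝ, V r θ ≠ 0)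
    (hPDE : ∀ r θ : ℝ,
      deriv (fun t => V r t) θ + deriv (fun s => V s θ) r * F r θ
        = deriv (fun s => F s θ) r * V r θ)
    (hΨ0 : ∀ r₀ : ℝ, Ψ 0 r₀ = r₀)
    (hflow : ∀ θ r₀ : ℝ, HasDerivAt (fun t => Ψ t r₀) (F (Ψ θ r₀) θ) θ) :
    ∀ᶠ r₀ in nhds (0 : ℝ),
      V (Ψ T r₀) T = V r₀ 0 * deriv (fun s => Ψ T s) r₀ :=
  stmt_2_general T F V Ψ hFa hVC1 hPDE hΨ0 hflow
end

section
/- Suppose V(r₀, T) = V(r₀, 0) for all r₀, V(r₀,0) = ν_m r₀^m + O(r₀^{m+1}) with ν_m ≠ 0, Π(r₀) = r₀ + c_k r₀^k + O(r₀^{k+1}) with c_k ≠ 0 and k ≥ 2, and the identity V(Π(r₀), T) = V(r₀,0) Π'(r₀) holds. Then k = m. -/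
open Asymptotics Filter Topology

/-!
Factor `V(r, 0) = r ^ m A(r)` and `Π(r) = r + r ^ k C(r)` with `A`, `C` analytic at `0`,
`A(0) = ν`, `C(0) = c`. Write the identity as `V(Π(r), 0) - V(r, 0) = V(r, 0) (Π'(r) - 1)` and
divide by `r ^ (m + k - 1)`: the left side tends to `m c ν`, because `A(Π(r)) - A(r) = O(r ^ k)`,
and the right side tends to `k c ν`. As `c ν ≠ 0`, `k = m`.
-/

lemma eq_zero_of_pow_mul_isBigO {g : ℝ → ℝ} {n : ℕ} (hg : ContinuousAt g 0)
    (h : (fun x => x ^ n * g x) =O[𝓝 0] fun x => x ^ (n + 1)) : g 0 = 0 := by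
  have hne : ∀ᶠ x in 𝓝[≠] (0 : ℝ), x ^ n ≠ 0 := by
    filter_upwards [self_mem_nhdsWithin] with x hx using pow_ne_zero n hx
  have hgO : g =O[𝓝[≠] 0] fun x => x := by
    refine ((isBigO_mul_iff_isBigO_div hne).mp (h.mono nhdsWithin_le_nhds)).congr' .rfl ?_
    filter_upwards [hne] with x hx
    rw [pow_succ, mul_div_cancel_left₀ _ hx]
  exact tendsto_nhds_unique hg.continuousWithinAt
    (hgO.trans_tendsto (tendsto_id.mono_left nhdsWithin_le_nhds))

lemma AnalyticAt.exists_eq_pow_mul_of_isBigO {f : ℝ → ℝ} (hf : AnalyticAt ℝ f 0) {n : ℕ}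
    (h : f =O[𝓝 0] fun x => x ^ n) : ∃ g, AnalyticAt ℝ g 0 ∧ ∀ x, f x = x ^ n * g x := by
  induction n with
  | zero => exact ⟨f, hf, by simp⟩
  | succ n ih =>
    obtain ⟨g, hg, hfg⟩ := ih (h.trans (isLittleO_pow_pow n.lt_succ_self).isBigO)
    have hg0 : g 0 = 0 :=
      eq_zero_of_pow_mul_isBigO hg.continuousAt (by rwa [funext hfg] at h)
    obtain ⟨p, hp⟩ := hg
    refine ⟨dslope g 0, ⟨_, hp.has_fpower_series_dslope_fslope⟩, fun x => ?_⟩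
    rw [hfg, ← sub_smul_dslope_of_zero hg0 x, smul_eq_mul, sub_zero, pow_succ, mul_assoc]

lemma AnalyticAt.exists_eq_pow_mul_of_isBigO_sub {f : ℝ → ℝ} (hf : AnalyticAt ℝ f 0) {a : ℝ}
    {n : ℕ} (h : (fun x => f x - a * x ^ n) =O[𝓝 0] fun x => x ^ (n + 1)) :
    ∃ g, AnalyticAt ℝ g 0 ∧ g 0 = a ∧ ∀ x, f x = x ^ n * g x := by
  obtain ⟨e, he, hfe⟩ := (hf.fun_sub (by fun_prop)).exists_eq_pow_mul_of_isBigO h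
  refine ⟨fun x => a + x * e x, by fun_prop, by simp, fun x => ?_⟩
  linear_combination hfe x

section LeadingTerms

variable {A C : ℝ → ℝ} {m j : ℕ}

lemma tendsto_one_add_pow_mul_pow_sub_one_div (hC : ContinuousAt C 0) (hj : j ≠ 0) :
    Tendsto (fun r => ((1 + r ^ j * C r) ^ m - 1) / r ^ j) (𝓝[≠] 0) (𝓝 (m * C 0)) := by
  have hcont : ContinuousAt (fun r => C r * ∑ i ∈ Finset.range m, (1 + r ^ j * C r) ^ i) 0 := by
    fun_prop
  have h0 : C 0 * ∑ i ∈ Finset.range m, (1 + 0 ^ j * C 0) ^ i = m * C 0 := by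
    simp [zero_pow hj, mul_comm]
  refine (h0 ▸ hcont.continuousWithinAt.tendsto).congr' ?_
  filter_upwards [self_mem_nhdsWithin] with r hr
  rw [← geom_sum_mul, add_sub_cancel_left]
  field_simp [pow_ne_zero j hr]

lemma tendsto_comp_add_sub_div_pow (hA : AnalyticAt ℝ A 0) {e : ℝ → ℝ}
    (he : e =O[𝓝 0] fun r => r ^ (j + 1)) :
    Tendsto (fun r => (A (r + e r) - A r) / r ^ j) (𝓝[≠] 0) (𝓝 0) := by
  have he0 : Tendsto e (𝓝 0) (𝓝 0) :=
    he.trans_tendsto ((continuous_pow (j + 1)).tendsto' 0 0 (zero_pow j.succ_ne_zero))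
  have hpair := (tendsto_id.add he0).prodMk_nhds tendsto_id
  rw [add_zero] at hpair
  have hdiff : (fun r => A (r + e r) - A r) =O[𝓝 0] e := by
    simpa [Function.comp_def] using
      hA.hasStrictDerivAt.hasStrictFDerivAt.isBigO_sub.comp_tendsto hpair
  exact ((hdiff.trans he).trans_isLittleO (isLittleO_pow_pow j.lt_succ_self)).tendsto_div_nhds_zero
    |>.mono_left nhdsWithin_le_nhds

lemma tendsto_deriv_add_pow_mul_sub_one_div (hC : AnalyticAt ℝ C 0) :
    Tendsto (fun r => (deriv (fun x => x + x ^ (j + 1) * C x) r - 1) / r ^ j) (𝓝[≠] 0)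
      (𝓝 ((j + 1) * C 0)) := by
  have hcont : ContinuousAt (fun r => (j + 1) * C r + r * deriv C r) 0 := by
    have := hC.deriv.continuousAt
    fun_prop
  have hlim := hcont.continuousWithinAt (s := {0}ᶜ)
  rw [ContinuousWithinAt, zero_mul, add_zero] at hlim
  refine hlim.congr' ?_
  filter_upwards [self_mem_nhdsWithin, nhdsWithin_le_nhds hC.eventually_analyticAt]
    with r hr hCr
  have hderiv : HasDerivAt (fun x => x + x ^ (j + 1) * C x)
      (1 + (((j + 1 : ℕ) : ℝ) * r ^ j * C r + r ^ (j + 1) * deriv C r)) r :=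
    (hasDerivAt_id r).add ((hasDerivAt_pow (j + 1) r).mul hCr.differentiableAt.hasDerivAt)
  rw [hderiv.deriv]
  field_simp [pow_ne_zero j hr]
  push_cast
  ring

lemma natCast_mul_mul_eq_of_comp_eq_mul_deriv {W P : ℝ → ℝ} (hA : AnalyticAt ℝ A 0)
    (hC : AnalyticAt ℝ C 0) (hj : j ≠ 0) (hW : ∀ x, W x = x ^ m * A x)
    (hP : ∀ x, P x = x + x ^ (j + 1) * C x) (h : ∀ᶠ r in 𝓝 0, W (P r) = W r * deriv P r) :
    m * C 0 * A 0 = (j + 1) * C 0 * A 0 := by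
  obtain rfl : P = fun x => x + x ^ (j + 1) * C x := funext hP
  have hAP : Tendsto (fun r => A (r + r ^ (j + 1) * C r)) (𝓝[≠] 0) (𝓝 (A 0)) := by
    have hCc := hC.continuousAt
    have hPc : ContinuousAt (fun r => A (r + r ^ (j + 1) * C r)) 0 :=
      hA.continuousAt.comp_of_eq (by fun_prop) (by simp)
    simpa using hPc.tendsto.mono_left nhdsWithin_le_nhds
  have hCO : (fun r => r ^ (j + 1) * C r) =O[𝓝 0] fun r => r ^ (j + 1) := by
    simpa using (isBigO_refl (fun r : ℝ => r ^ (j + 1)) _).mul (hC.continuousAt.isBigO_one ℝ)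
  have hlhs := ((tendsto_one_add_pow_mul_pow_sub_one_div (m := m) hC.continuousAt hj).mul hAP).add
    (tendsto_comp_add_sub_div_pow hA hCO)
  have hrhs := (hA.continuousAt.tendsto.mono_left nhdsWithin_le_nhds).mul
    (tendsto_deriv_add_pow_mul_sub_one_div (j := j) hC)
  have hlim := tendsto_nhds_unique (hlhs.congr' ?_) hrhs
  · linear_combination hlim
  -- divide the identity by `r ^ (m + j)`, using `P r = r * (1 + r ^ j * C r)`
  filter_upwards [self_mem_nhdsWithin, nhdsWithin_le_nhds h] with r hr hr'
  simp only [hW] at hr'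
  have hcancel : (1 + r ^ j * C r) ^ m * A (r + r ^ (j + 1) * C r) =
      A r * deriv (fun x => x + x ^ (j + 1) * C x) r := by
    refine mul_left_cancel₀ (pow_ne_zero m hr) ?_
    rw [← mul_assoc, ← mul_pow]
    linear_combination hr'
  generalize A (r + r ^ (j + 1) * C r) = a at hcancel ⊢
  field_simp [pow_ne_zero j hr]
  linear_combination hcancel

end LeadingTerms

theorem stmt_3_general
    (T : ℝ) (V : ℝ → ℝ → ℝ) (P : ℝ → ℝ) (ν c : ℝ) (m k : ℕ)
    (hk : 2 ≤ k) (hν : ν ≠ 0) (hc : c ≠ 0)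
    (hVT : ∀ r₀ : ℝ, V r₀ T = V r₀ 0)
    (hVan : AnalyticAt ℝ (fun r₀ => V r₀ 0) 0)
    (hPan : AnalyticAt ℝ P 0)
    (hVexp : (fun r₀ => V r₀ 0 - ν * r₀ ^ m) =O[nhds (0 : ℝ)] fun r₀ => r₀ ^ (m + 1))
    (hPexp : (fun r₀ => P r₀ - (r₀ + c * r₀ ^ k)) =O[nhds (0 : ℝ)] fun r₀ => r₀ ^ (k + 1))
    (hid : ∀ᶠ r₀ in nhds (0 : ℝ), V (P r₀) T = V r₀ 0 * deriv P r₀) :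
    k = m := by
  obtain ⟨j, rfl⟩ : ∃ j, k = j + 1 := ⟨k - 1, by omega⟩
  obtain ⟨A, hA, rfl, hW⟩ := hVan.exists_eq_pow_mul_of_isBigO_sub hVexp
  obtain ⟨C, hC, rfl, hP⟩ := (hPan.fun_sub analyticAt_id).exists_eq_pow_mul_of_isBigO_sub
    (a := c) (by simpa only [id, sub_sub] using hPexp)
  have hcoeff := natCast_mul_mul_eq_of_comp_eq_mul_deriv (W := fun r => V r 0) (P := P) hA hC
    (by omega : j ≠ 0) hW (fun x => eq_add_of_sub_eq' (hP x)) (by simpa only [hVT] using hid)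
  have hmk : (m : ℝ) = j + 1 := mul_right_cancel₀ (mul_ne_zero hc hν) (by linear_combination hcoeff)
  exact_mod_cast hmk.symm

/-- If `V(·,T) = V(·,0)`, `V(r₀,0) = ν r₀^m + O(r₀^{m+1})` with `ν ≠ 0`,
the Poincaré map satisfies `Π(r₀) = r₀ + c r₀^k + O(r₀^{k+1})` with `c ≠ 0`, `k ≥ 2`,
and the identity `V(Π(r₀),T) = V(r₀,0) Π'(r₀)` holds near `0`, then `k = m`. -/
theorem stmt_3
    (T : ℝ) (V : ℝ → ℝ → ℝ) (P : ℝ → ℝ) (ν c : ℝ) (m k : ℕ)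
    (hm : 1 ≤ m) (hk : 2 ≤ k) (hν : ν ≠ 0) (hc : c ≠ 0)
    (hVT : ∀ r₀ : ℝ, V r₀ T = V r₀ 0)
    (hVan : AnalyticAt ℝ (fun r₀ => V r₀ 0) 0)
    (hPan : AnalyticAt ℝ P 0)
    (hP0 : P 0 = 0) (hP0' : deriv P 0 = 1)
    (hVexp : (fun r₀ => V r₀ 0 - ν * r₀ ^ m) =O[nhds (0 : ℝ)] fun r₀ => r₀ ^ (m + 1))
    (hPexp : (fun r₀ => P r₀ - (r₀ + c * r₀ ^ k)) =O[nhds (0 : ℝ)] fun r₀ => r₀ ^ (k + 1))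
    (hid : ∀ᶠ r₀ in nhds (0 : ℝ), V (P r₀) T = V r₀ 0 * deriv P r₀) :
    k = m :=
  stmt_3_general T V P ν c m k hk hν hc hVT hVan hPan hVexp hPexp hid
end

section
/- The function V₀(x,y) = exp(−2μx²/(x²+y²))·(x²+y²)³ is an inverse integrating factor of the system ẋ = −y((2μ+1)x² + y²) + x³(λ₁x² + λ₂(x²+y²)), ẏ = x(x² + (1−2μ)y²) + x²y(λ₁x² + λ₂(x²+y²)) on ℝ² \ {(0,0)}. -/
/-!
Write `V₀ = exp (n / s) * s ^ 3` with `s = x² + y²`. A partial derivative of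
`exp (n / s) * s ^ k` is `exp (n / s) * s ^ k` times `(n' s - n s') / s² + k s' / s`, so both
partials of `V₀` are `exp (-2μx² / s)` times a polynomial, and the inverse integrating factor
identity becomes a polynomial identity in `x`, `y`, `μ`, `l₁`, `l₂` and that exponential.
-/

open Real

theorem HasDerivAt.exp_div_mul_pow {n s : ℝ → ℝ} {n' s' t : ℝ} (hn : HasDerivAt n n' t)
    (hs : HasDerivAt s s' t) (hs0 : s t ≠ 0) (k : ℕ) :
    HasDerivAt (fun u => Real.exp (n u / s u) * s u ^ k)
      (Real.exp (n t / s t) * s t ^ k * ((n' * s t - n t * s') / s t ^ 2 + k * s' / s t)) t := by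
  refine ((hn.fun_div hs hs0).exp.fun_mul (hs.fun_pow k)).congr_deriv ?_
  rcases k with _ | k
  · simp
  · rw [Nat.add_sub_cancel]
    field_simp
    ring

theorem hasDerivAt_V₀_fst (μ x y : ℝ) (hr : x ^ 2 + y ^ 2 ≠ 0) :
    HasDerivAt (fun x' => exp (-2 * μ * x' ^ 2 / (x' ^ 2 + y ^ 2)) * (x' ^ 2 + y ^ 2) ^ 3)
      (2 * x * (x ^ 2 + y ^ 2) * (3 * (x ^ 2 + y ^ 2) - 2 * μ * y ^ 2)
        * exp (-2 * μ * x ^ 2 / (x ^ 2 + y ^ 2))) x := by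
  refine (((hasDerivAt_pow 2 x).const_mul (-2 * μ)).exp_div_mul_pow
    ((hasDerivAt_pow 2 x).add_const (y ^ 2)) hr 3).congr_deriv ?_
  field_simp
  ring

theorem hasDerivAt_V₀_snd (μ x y : ℝ) (hr : x ^ 2 + y ^ 2 ≠ 0) :
    HasDerivAt (fun y' => exp (-2 * μ * x ^ 2 / (x ^ 2 + y' ^ 2)) * (x ^ 2 + y' ^ 2) ^ 3)
      (2 * y * (x ^ 2 + y ^ 2) * (3 * (x ^ 2 + y ^ 2) + 2 * μ * x ^ 2)
        * exp (-2 * μ * x ^ 2 / (x ^ 2 + y ^ 2))) y := by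
  refine ((hasDerivAt_const y (-2 * μ * x ^ 2)).exp_div_mul_pow
    ((hasDerivAt_pow 2 y).const_add (x ^ 2)) hr 3).congr_deriv ?_
  field_simp
  ring

theorem hasDerivAt_P_fst (μ l₁ l₂ x y : ℝ) :
    HasDerivAt (fun x' =>
        -y * ((2 * μ + 1) * x' ^ 2 + y ^ 2) + x' ^ 3 * (l₁ * x' ^ 2 + l₂ * (x' ^ 2 + y ^ 2)))
      (-2 * (2 * μ + 1) * x * y + 5 * (l₁ + l₂) * x ^ 4 + 3 * l₂ * x ^ 2 * y ^ 2) x := by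
  have hx2 := hasDerivAt_pow 2 x
  refine ((((hx2.const_mul (2 * μ + 1)).add_const (y ^ 2)).const_mul (-y)).fun_add
    ((hasDerivAt_pow 3 x).fun_mul
      ((hx2.const_mul l₁).fun_add ((hx2.add_const (y ^ 2)).const_mul l₂)))).congr_deriv ?_
  push_cast
  ring

theorem hasDerivAt_Q_snd (μ l₁ l₂ x y : ℝ) :
    HasDerivAt (fun y' =>
        x * (x ^ 2 + (1 - 2 * μ) * y' ^ 2) + x ^ 2 * y' * (l₁ * x ^ 2 + l₂ * (x ^ 2 + y' ^ 2)))
      (2 * (1 - 2 * μ) * x * y + (l₁ + l₂) * x ^ 4 + 3 * l₂ * x ^ 2 * y ^ 2) y := by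
  have hy2 := hasDerivAt_pow 2 y
  refine ((((hy2.const_mul (1 - 2 * μ)).const_add (x ^ 2)).const_mul x).fun_add
    (((hasDerivAt_id' y).const_mul (x ^ 2)).fun_mul
      (((hy2.const_add (x ^ 2)).const_mul l₂).const_add (l₁ * x ^ 2)))).congr_deriv ?_
  push_cast
  ring

/-- `V₀ = exp(-2μx²/(x²+y²))·(x²+y²)³` is an inverse integrating factor of
`ẋ = -y((2μ+1)x² + y²) + x³(λ₁x² + λ₂(x²+y²))`,
`ẏ = x(x² + (1-2μ)y²) + x²y(λ₁x² + λ₂(x²+y²))` on `ℝ² \ {(0,0)}`. -/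
theorem stmt_13 (μ l₁ l₂ : ℝ) :
    ∀ x y : ℝ, (x, y) ≠ ((0 : ℝ), (0 : ℝ)) →
      (-y * ((2 * μ + 1) * x ^ 2 + y ^ 2) + x ^ 3 * (l₁ * x ^ 2 + l₂ * (x ^ 2 + y ^ 2)))
          * deriv (fun x' =>
              Real.exp (-2 * μ * x' ^ 2 / (x' ^ 2 + y ^ 2)) * (x' ^ 2 + y ^ 2) ^ 3) x
        + (x * (x ^ 2 + (1 - 2 * μ) * y ^ 2) + x ^ 2 * y * (l₁ * x ^ 2 + l₂ * (x ^ 2 + y ^ 2)))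
          * deriv (fun y' =>
              Real.exp (-2 * μ * x ^ 2 / (x ^ 2 + y' ^ 2)) * (x ^ 2 + y' ^ 2) ^ 3) y
      = (deriv (fun x' =>
            -y * ((2 * μ + 1) * x' ^ 2 + y ^ 2) + x' ^ 3 * (l₁ * x' ^ 2 + l₂ * (x' ^ 2 + y ^ 2))) x
          + deriv (fun y' =>
            x * (x ^ 2 + (1 - 2 * μ) * y' ^ 2) + x ^ 2 * y' * (l₁ * x ^ 2 + l₂ * (x ^ 2 + y' ^ 2))) y)
        * (Real.exp (-2 * μ * x ^ 2 / (x ^ 2 + y ^ 2)) * (x ^ 2 + y ^ 2) ^ 3) := by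
  intro x y hxy
  have hr : x ^ 2 + y ^ 2 ≠ 0 := by
    rwa [sq, sq, Ne, mul_self_add_mul_self_eq_zero, ← Prod.mk_inj]
  rw [(hasDerivAt_V₀_fst μ x y hr).deriv, (hasDerivAt_V₀_snd μ x y hr).deriv,
    (hasDerivAt_P_fst μ l₁ l₂ x y).deriv, (hasDerivAt_Q_snd μ l₁ l₂ x y).deriv]
  ring
end

section
/- For the system ẋ = y + xR(x,y), ẏ = −x^{2n−1} + n·y·R(x,y), where R is a (1,n)-quasihomogeneous polynomial of weighted degree m+n−2, the function V₀(x,y) = (x^{2n} + n y²)^{(m−1)/(2n) + 1} is an inverse integrating factor on ℝ² \ {(0,0)}. -/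
/-!
Write `P = y + xR`, `Q = -x^{2n-1} + nyR` and `u = x^{2n} + ny²`. Along the Hamiltonian part
`(y, -x^{2n-1})` the weighted energy `u` is constant, while the radial part `R·(x, ny)` is the
`(1,n)`-Euler field times `R`, which scales `u` by its weighted degree `2n`; hence
`P ∂ₓ(u^α) + Q ∂ᵧ(u^α) = 2nα R u^α`. On the other side Euler's identity
`x ∂ₓR + n y ∂ᵧR = (m+n-2) R` gives `div(P,Q) = (m+2n-1) R`, and the exponent
`α = (m-1)/(2n) + 1` is exactly the one making `2nα = m+2n-1`.
-/

theorem differentiable_mvPolynomial_eval_fin_two (p : MvPolynomial (Fin 2) ℝ) :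
    Differentiable ℝ (fun v : ℝ × ℝ => MvPolynomial.eval ![v.1, v.2] p) := by
  induction p using MvPolynomial.induction_on with
  | C a => simp
  | add q r hq hr => simp only [map_add]; exact hq.add hr
  | mul_X q i hq =>
    simp only [MvPolynomial.eval_mul, MvPolynomial.eval_X]
    fin_cases i
    · exact hq.mul differentiable_fst
    · exact hq.mul differentiable_snd

section PartialDerivatives

variable {f : ℝ × ℝ → ℝ} {L : ℝ × ℝ →L[ℝ] ℝ} {a b : ℝ}

theorem HasFDerivAt.hasDerivAt_partial_fst (hf : HasFDerivAt f L (a, b)) :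
    HasDerivAt (fun x => f (x, b)) (L (1, 0)) a :=
  hf.comp_hasDerivAt a ((hasDerivAt_id a).prodMk (hasDerivAt_const a b))

theorem HasFDerivAt.hasDerivAt_partial_snd (hf : HasFDerivAt f L (a, b)) :
    HasDerivAt (fun y => f (a, y)) (L (0, 1)) b :=
  hf.comp_hasDerivAt b ((hasDerivAt_const b a).prodMk (hasDerivAt_id b))

theorem HasFDerivAt.euler_of_quasihomogeneous {p q k : ℕ} (hf : HasFDerivAt f L (a, b))
    (hqh : ∀ l : ℝ, f (l ^ p * a, l ^ q * b) = l ^ k * f (a, b)) :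
    p * a * L (1, 0) + q * b * L (0, 1) = k * f (a, b) := by
  have hcurve : HasDerivAt (fun l : ℝ => (l ^ p * a, l ^ q * b)) (p * a, q * b) 1 := by
    simpa using ((hasDerivAt_pow p 1).mul_const a).prodMk ((hasDerivAt_pow q 1).mul_const b)
  have hcomp := (show HasFDerivAt f L ((1 : ℝ) ^ p * a, (1 : ℝ) ^ q * b) by simpa using hf)
    |>.comp_hasDerivAt 1 hcurve
  rw [Function.comp_def, funext hqh] at hcomp
  have hscaling : HasDerivAt (fun l : ℝ => l ^ k * f (a, b)) (k * f (a, b)) 1 := by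
    simpa using (hasDerivAt_pow k 1).mul_const (f (a, b))
  have hsplit : ((p : ℝ) * a, (q : ℝ) * b) = (p * a) • ((1 : ℝ), (0 : ℝ)) + (q * b) • (0, 1) := by
    simp
  rw [← hcomp.unique hscaling, hsplit, map_add, map_smul, map_smul, smul_eq_mul, smul_eq_mul]

end PartialDerivatives

theorem divergence_eq_of_quasihomogeneous {R : ℝ → ℝ → ℝ} {n k : ℕ} {x y : ℝ}
    (hR : DifferentiableAt ℝ (fun v : ℝ × ℝ => R v.1 v.2) (x, y))
    (hqh : ∀ l : ℝ, R (l * x) (l ^ n * y) = l ^ k * R x y) :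
    deriv (fun x' => y + x' * R x' y) x + deriv (fun y' => -x ^ (2 * n - 1) + n * y' * R x y') y
      = (k + n + 1) * R x y := by
  have hf := hR.hasFDerivAt
  have hRx : HasDerivAt (fun x' => R x' y) _ x := hf.hasDerivAt_partial_fst
  have hRy : HasDerivAt (fun y' => R x y') _ y := hf.hasDerivAt_partial_snd
  have heuler := hf.euler_of_quasihomogeneous (p := 1) (by simpa using hqh)
  simp only [Nat.cast_one, one_mul] at heuler
  have hP : HasDerivAt (fun x' => y + x' * R x' y) _ x := ((hasDerivAt_id' x).mul hRx).const_add y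
  have hQ : HasDerivAt (fun y' => -x ^ (2 * n - 1) + n * y' * R x y') _ y :=
    (((hasDerivAt_id' y).const_mul (n : ℝ)).mul hRy).const_add _
  rw [hP.deriv, hQ.deriv]
  linear_combination heuler

theorem weighted_energy_pos {n : ℕ} (hn : 0 < n) {x y : ℝ} (hxy : (x, y) ≠ (0, 0)) :
    0 < x ^ (2 * n) + n * y ^ 2 := by
  rcases eq_or_ne x 0 with rfl | hx
  · have hy : y ≠ 0 := fun hy => hxy (by rw [hy])
    rw [zero_pow (by omega), zero_add]
    positivity
  · have := (even_two_mul n).pow_pos hx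
    positivity

theorem lieDerivative_weighted_energy_rpow {n : ℕ} (hn : 0 < n) {x y : ℝ} (α r : ℝ)
    (hu : x ^ (2 * n) + n * y ^ 2 ≠ 0) :
    (y + x * r) * deriv (fun x' => (x' ^ (2 * n) + n * y ^ 2) ^ α) x
        + (-x ^ (2 * n - 1) + n * y * r) * deriv (fun y' => (x ^ (2 * n) + n * y' ^ 2) ^ α) y
      = 2 * n * α * r * (x ^ (2 * n) + n * y ^ 2) ^ α := by
  set u := x ^ (2 * n) + n * y ^ 2
  have hdx := ((hasDerivAt_pow (2 * n) x).add_const (n * y ^ 2)).rpow_const (p := α) (Or.inl hu)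
  have hdy := (((hasDerivAt_pow 2 y).const_mul (n : ℝ)).const_add (x ^ (2 * n))).rpow_const
    (p := α) (Or.inl hu)
  rw [hdx.deriv, hdy.deriv]
  have hpow : x ^ (2 * n - 1) * x = x ^ (2 * n) := by
    rw [← pow_succ, Nat.sub_add_cancel (by omega)]
  have hrpow : u ^ (α - 1) * u = u ^ α := by
    rw [← Real.rpow_add_one hu, sub_add_cancel]
  push_cast
  linear_combination (2 * n * α * r) * hrpow + (2 * n * α * r * u ^ (α - 1)) * hpow

theorem stmt_14_general (n m : ℕ) (hn : 2 ≤ n)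
    (R : ℝ → ℝ → ℝ)
    (hRpoly : ∃ p : MvPolynomial (Fin 2) ℝ, ∀ x y : ℝ, R x y = MvPolynomial.eval ![x, y] p)
    (hRqh : ∀ l x y : ℝ, R (l * x) (l ^ n * y) = l ^ (m + n - 2) * R x y) :
    ∀ x y : ℝ, (x, y) ≠ ((0 : ℝ), (0 : ℝ)) →
      (y + x * R x y)
          * deriv (fun x' => (x' ^ (2 * n) + n * y ^ 2) ^ (((m : ℝ) - 1) / (2 * n) + 1)) x
        + (-x ^ (2 * n - 1) + n * y * R x y)
          * deriv (fun y' => (x ^ (2 * n) + n * y' ^ 2) ^ (((m : ℝ) - 1) / (2 * n) + 1)) y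
      = (deriv (fun x' => y + x' * R x' y) x
          + deriv (fun y' => -x ^ (2 * n - 1) + n * y' * R x y') y)
        * (x ^ (2 * n) + n * y ^ 2) ^ (((m : ℝ) - 1) / (2 * n) + 1) := by
  intro x y hxy
  obtain ⟨p, hp⟩ := hRpoly
  have hR : Differentiable ℝ (fun v : ℝ × ℝ => R v.1 v.2) := by
    simpa only [hp] using differentiable_mvPolynomial_eval_fin_two p
  rw [lieDerivative_weighted_energy_rpow (by omega) _ _ (weighted_energy_pos (by omega) hxy).ne',
    divergence_eq_of_quasihomogeneous (hR (x, y)) (hRqh · x y)]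
  have hdeg : ((m + n - 2 : ℕ) : ℝ) = m + n - 2 := by
    rw [Nat.cast_sub (by omega)]
    push_cast
    ring
  rw [hdeg]
  field_simp
  ring

/-- For `ẋ = y + xR(x,y)`, `ẏ = -x^{2n-1} + n y R(x,y)`, with `R` a
`(1,n)`-quasihomogeneous polynomial of weighted degree `m+n-2`, the function
`V₀ = (x^{2n} + n y²)^{(m-1)/(2n) + 1}` is an inverse integrating factor on `ℝ² \ {0}`. -/
theorem stmt_14 (n m : ℕ) (hn : 2 ≤ n) (hm : 1 ≤ m) (hpar : Even (m + n))
    (R : ℝ → ℝ → ℝ)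
    (hRpoly : ∃ p : MvPolynomial (Fin 2) ℝ, ∀ x y : ℝ, R x y = MvPolynomial.eval ![x, y] p)
    (hRqh : ∀ l x y : ℝ, R (l * x) (l ^ n * y) = l ^ (m + n - 2) * R x y) :
    ∀ x y : ℝ, (x, y) ≠ ((0 : ℝ), (0 : ℝ)) →
      (y + x * R x y)
          * deriv (fun x' => (x' ^ (2 * n) + n * y ^ 2) ^ (((m : ℝ) - 1) / (2 * n) + 1)) x
        + (-x ^ (2 * n - 1) + n * y * R x y)
          * deriv (fun y' => (x ^ (2 * n) + n * y' ^ 2) ^ (((m : ℝ) - 1) / (2 * n) + 1)) y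
      = (deriv (fun x' => y + x' * R x' y) x
          + deriv (fun y' => -x ^ (2 * n - 1) + n * y' * R x y') y)
        * (x ^ (2 * n) + n * y ^ 2) ^ (((m : ℝ) - 1) / (2 * n) + 1) :=
  stmt_14_general n m hn R hRpoly hRqh
end

section
/- For the (1,n)-quasihomogeneous system ẋ = y − ν₁xⁿ, ẏ = −x^{2n−1} + ν₂x^{n−1}y, the polynomial V₀(x,y) = x^{2n} − (ν₂ + nν₁)xⁿy + ny² is an inverse integrating factor. -/
/-! Writing `p = xⁿ` and using `x^{2n-1} = x^{n-1} p` (exponents in `ℕ`, with truncated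
subtraction), every term of both sides carries the factor `x^{n-1}`. After removing it, the claim is
the polynomial identity
`(y - ν₁p)(2np - cny) + (ν₂y - p)(2ny - cp) = (ν₂ - nν₁)(p² - cpy + ny²)` with `c = ν₂ + nν₁`. -/

theorem pow_two_mul_sub_one {M : Type*} [Monoid M] (x : M) (n : ℕ) :
    x ^ (2 * n - 1) = x ^ (n - 1) * x ^ n := by
  rw [← pow_add]
  congr 1
  omega

section Derivatives

variable {𝕜 : Type*} [NontriviallyNormedField 𝕜]

theorem deriv_pow_sub_mul_pow_mul_add (m n : ℕ) (a b x y : 𝕜) :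
    deriv (fun t => t ^ m - a * t ^ n * y + b) x = m * x ^ (m - 1) - a * (n * x ^ (n - 1)) * y :=
  (((hasDerivAt_pow m x).sub (((hasDerivAt_pow n x).const_mul a).mul_const y)).add_const b).deriv

theorem deriv_const_sub_mul_pow (n : ℕ) (a b x : 𝕜) :
    deriv (fun t => b - a * t ^ n) x = -(a * (n * x ^ (n - 1))) :=
  ((hasDerivAt_pow n x).const_mul a).const_sub b |>.deriv

theorem deriv_const_sub_mul_add_mul_sq (a b c y : 𝕜) :
    deriv (fun t => a - b * t + c * t ^ 2) y = -b + c * (2 * y) := by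
  have h : HasDerivAt (fun t => a - b * t + c * t ^ 2) (-(b * 1) + c * (↑2 * y ^ (2 - 1))) y :=
    (((hasDerivAt_id' y).const_mul b).const_sub a).add ((hasDerivAt_pow 2 y).const_mul c)
  rw [h.deriv]
  norm_num

theorem deriv_const_add_mul (a b y : 𝕜) : deriv (fun t => a + b * t) y = b := by
  simp

end Derivatives

theorem stmt_15_general (n : ℕ) (ν₁ ν₂ : ℝ) :
    ∀ x y : ℝ,
      (y - ν₁ * x ^ n)
          * deriv (fun x' => x' ^ (2 * n) - (ν₂ + n * ν₁) * x' ^ n * y + n * y ^ 2) x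
        + (-x ^ (2 * n - 1) + ν₂ * x ^ (n - 1) * y)
          * deriv (fun y' => x ^ (2 * n) - (ν₂ + n * ν₁) * x ^ n * y' + n * y' ^ 2) y
      = (deriv (fun x' => y - ν₁ * x' ^ n) x
          + deriv (fun y' => -x ^ (2 * n - 1) + ν₂ * x ^ (n - 1) * y') y)
        * (x ^ (2 * n) - (ν₂ + n * ν₁) * x ^ n * y + n * y ^ 2) := by
  intro x y
  rw [deriv_pow_sub_mul_pow_mul_add, deriv_const_sub_mul_add_mul_sq, deriv_const_sub_mul_pow,
    deriv_const_add_mul, pow_two_mul_sub_one, two_mul n, pow_add]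
  push_cast
  ring

/-- For the system `ẋ = y - ν₁xⁿ`, `ẏ = -x^{2n-1} + ν₂x^{n-1}y`, the
polynomial `V₀ = x^{2n} - (ν₂ + nν₁)xⁿy + ny²` is an inverse integrating factor. -/
theorem stmt_15 (n : ℕ) (hn : 2 ≤ n) (ν₁ ν₂ : ℝ) :
    ∀ x y : ℝ,
      (y - ν₁ * x ^ n)
          * deriv (fun x' => x' ^ (2 * n) - (ν₂ + n * ν₁) * x' ^ n * y + n * y ^ 2) x
        + (-x ^ (2 * n - 1) + ν₂ * x ^ (n - 1) * y)
          * deriv (fun y' => x ^ (2 * n) - (ν₂ + n * ν₁) * x ^ n * y' + n * y' ^ 2) y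
      = (deriv (fun x' => y - ν₁ * x' ^ n) x
          + deriv (fun y' => -x ^ (2 * n - 1) + ν₂ * x ^ (n - 1) * y') y)
        * (x ^ (2 * n) - (ν₂ + n * ν₁) * x ^ n * y + n * y ^ 2) :=
  stmt_15_general n ν₁ ν₂
end

section
/- If ν₁ν₂ − 1 < 0 and (ν₂ + nν₁)² − 4n < 0, then the function z(θ) = 1 − (ν₂ + nν₁)·Csⁿ(θ)·Sn(θ) is strictly positive for all θ ∈ ℝ. -/
/-! The conserved energy `Cs^{2n} + n Sn²` of the system `x' = -y`, `y' = x^{2n-1}` equals `1`,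
so with `a = ν₂ + nν₁`, `c = Csⁿθ`, `s = Snθ` we have
`4 (1 - a c s) = (2c - a s)² + (4n - a²) s²`. Since `a² < 4n` this is positive unless `s = 0`,
in which case `c² = 1` and the left side is `4`. -/

theorem cs_pow_two_mul_add_mul_sn_sq_eq_one (n : ℕ) (Cs Sn : ℝ → ℝ)
    (hCs : ∀ θ : ℝ, HasDerivAt Cs (-(Sn θ)) θ)
    (hSn : ∀ θ : ℝ, HasDerivAt Sn (Cs θ ^ (2 * n - 1)) θ)
    (hCs0 : Cs 0 = 1) (hSn0 : Sn 0 = 0) (θ : ℝ) :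
    Cs θ ^ (2 * n) + n * Sn θ ^ 2 = 1 := by
  have hEnergy : ∀ t, HasDerivAt (fun t => Cs t ^ (2 * n) + n * Sn t ^ 2) 0 t := by
    intro t
    refine (((hCs t).fun_pow (2 * n)).fun_add
      (((hSn t).fun_pow 2).const_mul (n : ℝ))).congr_deriv ?_
    push_cast
    ring
  calc Cs θ ^ (2 * n) + n * Sn θ ^ 2 = Cs 0 ^ (2 * n) + n * Sn 0 ^ 2 :=
        is_const_of_deriv_eq_zero (fun t => (hEnergy t).differentiableAt)
          (fun t => (hEnergy t).deriv) θ 0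
    _ = 1 := by simp [hCs0, hSn0]

theorem one_sub_mul_mul_pos_of_sq_add_mul_sq_eq_one {a c s m : ℝ}
    (hcs : c ^ 2 + m * s ^ 2 = 1) (ha : a ^ 2 < 4 * m) : 0 < 1 - a * c * s := by
  have hdecomp : 4 * (1 - a * c * s) = (2 * c - a * s) ^ 2 + (4 * m - a ^ 2) * s ^ 2 := by
    rw [← hcs]; ring
  rcases eq_or_ne s 0 with rfl | hs
  · simp
  · have : 0 < (4 * m - a ^ 2) * s ^ 2 := mul_pos (by linarith) (by positivity)
    linarith [sq_nonneg (2 * c - a * s)]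

theorem stmt_16_general (n : ℕ) (ν₁ ν₂ : ℝ)
    (h2 : (ν₂ + n * ν₁) ^ 2 - 4 * n < 0)
    (Cs Sn : ℝ → ℝ)
    (hCs : ∀ θ : ℝ, HasDerivAt Cs (-(Sn θ)) θ)
    (hSn : ∀ θ : ℝ, HasDerivAt Sn (Cs θ ^ (2 * n - 1)) θ)
    (hCs0 : Cs 0 = 1) (hSn0 : Sn 0 = 0) :
    ∀ θ : ℝ, 0 < 1 - (ν₂ + n * ν₁) * Cs θ ^ n * Sn θ := by
  intro θ
  have hpyth : (Cs θ ^ n) ^ 2 + n * Sn θ ^ 2 = 1 := by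
    rw [← pow_mul, mul_comm n 2]
    exact cs_pow_two_mul_add_mul_sn_sq_eq_one n Cs Sn hCs hSn hCs0 hSn0 θ
  exact one_sub_mul_mul_pos_of_sq_add_mul_sq_eq_one hpyth (by linarith)

/-- If `ν₁ν₂ - 1 < 0` and `(ν₂ + nν₁)² - 4n < 0`, then
`z(θ) = 1 - (ν₂ + nν₁)·Csⁿθ·Snθ > 0` for all `θ`, where `Cs`, `Sn` are the generalized
trigonometric functions. -/
theorem stmt_16 (n : ℕ) (hn : 2 ≤ n) (ν₁ ν₂ : ℝ)
    (h1 : ν₁ * ν₂ - 1 < 0) (h2 : (ν₂ + n * ν₁) ^ 2 - 4 * n < 0)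
    (Cs Sn : ℝ → ℝ)
    (hCs : ∀ θ : ℝ, HasDerivAt Cs (-(Sn θ)) θ)
    (hSn : ∀ θ : ℝ, HasDerivAt Sn (Cs θ ^ (2 * n - 1)) θ)
    (hCs0 : Cs 0 = 1) (hSn0 : Sn 0 = 0) :
    ∀ θ : ℝ, 0 < 1 - (ν₂ + n * ν₁) * Cs θ ^ n * Sn θ :=
  stmt_16_general n ν₁ ν₂ h2 Cs Sn hCs hSn hCs0 hSn0
end
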